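/- arXiv:2502.20374 — 2 statements merged into one kernel-verified Lean document; each statement's English description precedes it below -/
import Mathlib

section
/- Trace preservation of iterated DQE instruments: let K be Hermitian with [K, P₀] = 0 and ‖K‖ ≤ 1, let P_x be orthogonal projectors summing to I with P₀P_x = 0 for x ≠ 0, and let U_x be unitaries with U_x P_x U_x† = P₀ (U₀ = I). Define ℰ₀(ρ) = ∑_x K U_x P_x ρ P_x U_x† K and ℰ₁(ρ) = (1 - tr ℰ₀(ρ))·P₀/2^{n-k}, and ℰ = ℰ₀ + ℰ₁. Then for every density matrix ρ and every t ≥ 1, tr(P₀ ℰ^t(ρ) P₀) = tr(ℰ^t(ρ)) = 1; i.e., the output of any number of iterations is supported entirely on the codespace. -/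
open scoped Matrix.Norms.L2Operator ComplexOrder

/-!
Each Kraus term of `ℰ₀` factors through the codespace: from `Uₓ Pₓ Uₓ† = P₀` and unitarity,
`Uₓ Pₓ = P₀ Uₓ` and `Pₓ Uₓ† = Uₓ† P₀`, and `K` commutes with `P₀`, so
`K Uₓ Pₓ σ Pₓ Uₓ† K = P₀ (K Uₓ σ Uₓ† K) P₀`. The correction `ℰ₁` is a multiple of `P₀` as well,
so every output of `ℰ` is supported on the codespace, and its trace is `1` by construction
because `tr (P₀ / 2^{n-k}) = 1`. Both facts hold for `ℰ σ` for an arbitrary `σ`, hence for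
`ℰᵗ ρ = ℰ (ℰᵗ⁻¹ ρ)`.
-/

section Unitary

variable {R : Type*} [Monoid R] [StarMul R] {U p q : R}

theorem Unitary.mul_eq_mul_of_mul_mul_star_eq (hU : U ∈ unitary R) (h : U * p * star U = q) :
    U * p = q * U := by
  rw [← h, mul_assoc _ (star U), Unitary.star_mul_self_of_mem hU, mul_one]

theorem Unitary.mul_star_eq_star_mul_of_mul_mul_star_eq (hU : U ∈ unitary R)
    (h : U * p * star U = q) : p * star U = star U * q := by
  rw [← h, ← mul_assoc, ← mul_assoc, Unitary.star_mul_self_of_mem hU, one_mul]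

theorem Unitary.sandwich_eq_mul_sandwich_mul {K : R} (hU : U ∈ unitary R)
    (h : U * p * star U = q) (hK : K * q = q * K) (σ : R) :
    K * U * p * σ * p * star U * K = q * (K * U * σ * star U * K) * q :=
  calc K * U * p * σ * p * star U * K = K * (U * p) * σ * (p * star U) * K := by
        simp only [mul_assoc]
    _ = (K * q) * (U * σ * star U) * (q * K) := by
        rw [mul_eq_mul_of_mul_mul_star_eq hU h, mul_star_eq_star_mul_of_mul_mul_star_eq hU h]
        simp only [mul_assoc]
    _ = (q * K) * (U * σ * star U) * (K * q) := by rw [hK]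
    _ = q * (K * U * σ * star U * K) * q := by simp only [mul_assoc]

end Unitary

theorem IsIdempotentElem.mul_mul_mul_mul_self {M : Type*} [Semigroup M] {q : M}
    (hq : IsIdempotentElem q) (y : M) : q * (q * y * q) * q = q * y * q := by
  rw [← mul_assoc, ← mul_assoc, hq.eq, hq.mul_mul_self]

theorem Matrix.trace_add_one_sub_trace_smul_inv_smul {m 𝕜 : Type*} [Fintype m] [Field 𝕜]
    (A Q : Matrix m m 𝕜) {c : 𝕜} (hQ : Q.trace = c) (hc : c ≠ 0) :
    (A + (1 - A.trace) • (c⁻¹ • Q)).trace = 1 := by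
  rw [trace_add, trace_smul, trace_smul, hQ, smul_eq_mul, smul_eq_mul, inv_mul_cancel₀ hc]
  ring

theorem dqe_instruments_trace_preserving_general
    {n k : ℕ} {X : Type*} [Fintype X] (x0 : X)
    (P : X → Matrix (Fin (2 ^ n)) (Fin (2 ^ n)) ℂ)
    (hPidem : ∀ x, P x * P x = P x)
    (hrank : (P x0).trace = (2 ^ (n - k) : ℂ))
    (U : X → Matrix (Fin (2 ^ n)) (Fin (2 ^ n)) ℂ)
    (hUunit : ∀ x, U x ∈ Matrix.unitaryGroup (Fin (2 ^ n)) ℂ)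
    (hUconj : ∀ x, U x * P x * star (U x) = P x0)
    (K : Matrix (Fin (2 ^ n)) (Fin (2 ^ n)) ℂ)
    (hKcomm : K * P x0 = P x0 * K)
    (E : Matrix (Fin (2 ^ n)) (Fin (2 ^ n)) ℂ → Matrix (Fin (2 ^ n)) (Fin (2 ^ n)) ℂ)
    (hE : E = fun ρ =>
      (∑ x, K * U x * P x * ρ * P x * star (U x) * K) +
        ((1 - (∑ x, K * U x * P x * ρ * P x * star (U x) * K).trace) •
          ((2 ^ (n - k) : ℂ)⁻¹ • P x0)))
    (ρ : Matrix (Fin (2 ^ n)) (Fin (2 ^ n)) ℂ) :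
    ∀ t : ℕ, 1 ≤ t →
      (P x0 * (E^[t] ρ) * P x0).trace = 1 ∧ (E^[t] ρ).trace = 1 := by
  have hP0 : IsIdempotentElem (P x0) := hPidem x0
  have hterm (x σ) := Unitary.sandwich_eq_mul_sandwich_mul (hUunit x) (hUconj x) hKcomm σ
  have hsupp : ∀ σ, P x0 * E σ * P x0 = E σ := by
    intro σ
    simp only [hE, hterm, mul_add, add_mul, Finset.mul_sum, Finset.sum_mul,
      hP0.mul_mul_mul_mul_self, Matrix.mul_smul, Matrix.smul_mul, hP0.eq]
  have htr : ∀ σ, (E σ).trace = 1 := fun σ => by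
    rw [hE]
    exact Matrix.trace_add_one_sub_trace_smul_inv_smul _ _ hrank (by positivity)
  rintro (_ | t) ht
  · omega
  rw [Function.iterate_succ_apply']
  exact ⟨by rw [hsupp, htr], htr _⟩

/-- trace preservation and codespace support of iterated DQE
instruments: with syndrome projectors `P x` summing to the identity, recovery
unitaries `U x` with `U x * P x * (U x)† = P x₀` (`U x₀ = I`), and a positive
semidefinite contraction `K` commuting with the codespace projector `P x₀` of rank
`2^(n-k)`, the map `ℰ(ρ) = ℰ₀(ρ) + (1 - tr ℰ₀(ρ)) P₀/2^{n-k}` (with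
`ℰ₀(ρ) = ∑ₓ K Uₓ Pₓ ρ Pₓ Uₓ† K`) satisfies
`tr(P₀ ℰᵗ(ρ) P₀) = tr(ℰᵗ(ρ)) = 1` for every density matrix `ρ` and every `t ≥ 1`. -/
theorem dqe_instruments_trace_preserving
    {n k : ℕ} (hkn : k ≤ n) {X : Type*} [Fintype X] [DecidableEq X] (x0 : X)
    (P : X → Matrix (Fin (2 ^ n)) (Fin (2 ^ n)) ℂ)
    (hPsum : ∑ x, P x = 1)
    (hPherm : ∀ x, (P x).IsHermitian)
    (hPidem : ∀ x, P x * P x = P x)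
    (hPorth : ∀ x y, x ≠ y → P x * P y = 0)
    (hrank : (P x0).trace = (2 ^ (n - k) : ℂ))
    (U : X → Matrix (Fin (2 ^ n)) (Fin (2 ^ n)) ℂ)
    (hUunit : ∀ x, U x ∈ Matrix.unitaryGroup (Fin (2 ^ n)) ℂ)
    (hU0 : U x0 = 1)
    (hUconj : ∀ x, U x * P x * star (U x) = P x0)
    (K : Matrix (Fin (2 ^ n)) (Fin (2 ^ n)) ℂ)
    (hKpsd : K.PosSemidef) (hKnorm : ‖K‖ ≤ 1)
    (hKcomm : K * P x0 = P x0 * K)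
    (E : Matrix (Fin (2 ^ n)) (Fin (2 ^ n)) ℂ → Matrix (Fin (2 ^ n)) (Fin (2 ^ n)) ℂ)
    (hE : E = fun ρ =>
      (∑ x, K * U x * P x * ρ * P x * star (U x) * K) +
        ((1 - (∑ x, K * U x * P x * ρ * P x * star (U x) * K).trace) •
          ((2 ^ (n - k) : ℂ)⁻¹ • P x0)))
    (ρ : Matrix (Fin (2 ^ n)) (Fin (2 ^ n)) ℂ)
    (hρ : ρ.PosSemidef) (hρtr : ρ.trace = 1) :
    ∀ t : ℕ, 1 ≤ t →
      (P x0 * (E^[t] ρ) * P x0).trace = 1 ∧ (E^[t] ρ).trace = 1 :=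
  dqe_instruments_trace_preserving_general x0 P hPidem hrank U hUunit hUconj K hKcomm E hE ρ
end

section
/- Block spectral gap of the dissipative computation transfer matrix: let S_k be the (T+1)×(T+1) symmetric tridiagonal matrix with entries (S_k)_{0,0} = k/(2N), (S_k)_{T,T} = 1/2, (S_k)_{t,t+1} = (S_k)_{t+1,t} = 1/2 for 0 ≤ t ≤ T-1, and all other entries 0. Then: (a) S_N (i.e., k = N) has largest eigenvalue 1, attained by a unique (up to scale) eigenvector, and second-largest eigenvalue cos(π/(T+1)); (b) S_0 has largest eigenvalue cos(π/(2T+3)). Consequently the spectral gap of S_N is 1 - cos(π/(T+1)) = Θ(T^{-2}). -/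
/-!
Both blocks are Jacobi matrices whose eigenvectors are sampled sinusoids. A function `g` with
`g (t + 1) + g (t - 1) = 2 cos θ · g t` satisfies every interior row of `S_k g = cos θ · g`, and
the two boundary rows become conditions on the ghost values `g (-1)` and `g (T + 1)`. For `S_N`
the vectors `cos ((t + 1/2) θ)` with `(T + 1) θ ∈ π ℕ` meet them, for `S_0` the vectors
`sin ((t + 1) φ)` with `(2T + 3) φ ∈ π (2ℕ + 1)`. This gives `T + 1` distinct eigenvalues in
dimension `T + 1`, so they are the whole spectrum, and each is simple because it is a simple root
of the characteristic polynomial. The ordering claims then follow from the monotonicity of `cos`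
on `[0, π]`, and the gap bounds from `2x²/π² ≤ 1 - cos x ≤ x²/2`.
-/

open Real

/-- The `(T+1) × (T+1)` symmetric tridiagonal block `S_k`: diagonal entries
`k/(2N)` at `(0,0)`, `1/2` at `(T,T)`, zero elsewhere on the diagonal, and `1/2`
on the super- and sub-diagonals. -/
noncomputable def Sblock (N T k : ℕ) : Matrix (Fin (T + 1)) (Fin (T + 1)) ℝ :=
  Matrix.of fun i j =>
    if (i : ℕ) = (j : ℕ) then
      (if (i : ℕ) = 0 then (k : ℝ) / (2 * N) else if (i : ℕ) = T then 1 / 2 else 0)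
    else if (i : ℕ) + 1 = (j : ℕ) ∨ (j : ℕ) + 1 = (i : ℕ) then 1 / 2 else 0

open Matrix

namespace Module.End

variable {K V ι : Type*} [Field K] [AddCommGroup V] [Module K V] [FiniteDimensional K V]
  [Fintype ι] {φ : End K V} {f : ι → K}

theorem charpoly_roots_eq_map_of_injective (hf : Function.Injective f)
    (hcard : Fintype.card ι = finrank K V) (hφ : ∀ i, φ.HasEigenvalue (f i)) :
    φ.charpoly.roots = Finset.univ.val.map f := by
  have hnodup : (Finset.univ.val.map f).Nodup := Finset.univ.nodup.map hf
  symm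
  refine Multiset.eq_of_le_of_card_le ((Multiset.le_iff_subset hnodup).2 ?_) ?_
  · intro μ hμ
    obtain ⟨i, -, rfl⟩ := Multiset.mem_map.1 hμ
    rw [Polynomial.mem_roots φ.charpoly_monic.ne_zero, ← hasEigenvalue_iff_isRoot_charpoly]
    exact hφ i
  · calc φ.charpoly.roots.card ≤ φ.charpoly.natDegree := Polynomial.card_roots' _
      _ = (Finset.univ.val.map f).card := by simp [LinearMap.charpoly_natDegree, ← hcard]

theorem hasEigenvalue_iff_mem_range_of_injective (hf : Function.Injective f)
    (hcard : Fintype.card ι = finrank K V) (hφ : ∀ i, φ.HasEigenvalue (f i)) {μ : K} :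
    φ.HasEigenvalue μ ↔ μ ∈ Set.range f := by
  refine ⟨fun hμ => ?_, by rintro ⟨i, rfl⟩; exact hφ i⟩
  rw [hasEigenvalue_iff_isRoot_charpoly, ← Polynomial.mem_roots φ.charpoly_monic.ne_zero,
    charpoly_roots_eq_map_of_injective hf hcard hφ] at hμ
  simpa using hμ

theorem finrank_eigenspace_eq_one_of_injective (hf : Function.Injective f)
    (hcard : Fintype.card ι = finrank K V) (hφ : ∀ i, φ.HasEigenvalue (f i)) (i : ι) :
    finrank K (φ.eigenspace (f i)) = 1 := by
  classical
  refine le_antisymm ?_ (Submodule.one_le_finrank_iff.2 (hφ i))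
  calc finrank K (φ.eigenspace (f i))
      ≤ φ.charpoly.rootMultiplicity (f i) := LinearMap.finrank_eigenspace_le φ (f i)
    _ = (Finset.univ.val.map f).count (f i) := by
      rw [← Polynomial.count_roots, charpoly_roots_eq_map_of_injective hf hcard hφ]
    _ ≤ 1 := Multiset.nodup_iff_count_le_one.1 (Finset.univ.nodup.map hf) _

end Module.End

namespace Matrix

variable {n K : Type*} [Fintype n] [DecidableEq n] [Field K]

theorem hasEigenvalue_toLin'_of_mulVec_eq_smul {A : Matrix n n K} {v : n → K} {μ : K}
    (hv : v ≠ 0) (h : A *ᵥ v = μ • v) : Module.End.HasEigenvalue (toLin' A) μ :=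
  Module.End.hasEigenvalue_of_hasEigenvector
    ⟨Module.End.mem_eigenspace_iff.2 (by rwa [toLin'_apply]), hv⟩

theorem spectrum_eq_range_of_injective {A : Matrix n n K} {f : n → K}
    (hf : Function.Injective f) (hA : ∀ i, Module.End.HasEigenvalue (toLin' A) (f i)) :
    spectrum K A = Set.range f := by
  ext μ
  rw [← spectrum_toLin', ← Module.End.hasEigenvalue_iff_mem_spectrum,
    Module.End.hasEigenvalue_iff_mem_range_of_injective hf (by simp) hA]

end Matrix

namespace Real

theorem injective_cos_comp_fin {n : ℕ} {g : ℕ → ℝ} (hg : StrictMono g) (h0 : 0 ≤ g 0)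
    (hn : g n ≤ π) :
    Function.Injective fun j : Fin (n + 1) => cos (g j) := by
  have hmem (j : Fin (n + 1)) : g j ∈ Set.Icc 0 π :=
    ⟨h0.trans (hg.monotone (j : ℕ).zero_le), (hg.monotone (Nat.lt_succ_iff.1 j.2)).trans hn⟩
  exact fun i j h => Fin.ext (hg.injective (injOn_cos (hmem i) (hmem j) h))

theorem one_sub_cos_pi_div_add_one_bounds {u : ℝ} (hu : 1 ≤ u) :
    1 / 2 / u ^ 2 ≤ 1 - cos (π / (u + 1)) ∧ 1 - cos (π / (u + 1)) ≤ π ^ 2 / 2 / u ^ 2 := by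
  have hx : |π / (u + 1)| ≤ π := by
    rw [abs_of_pos (by positivity)]
    exact div_le_self pi_pos.le (by linarith)
  constructor
  · calc 1 / 2 / u ^ 2 ≤ 2 / π ^ 2 * (π / (u + 1)) ^ 2 := by
          have : 2 / π ^ 2 * (π / (u + 1)) ^ 2 = 2 / (u + 1) ^ 2 := by field_simp
          rw [this, div_div, div_le_div_iff₀ (by positivity) (by positivity)]
          nlinarith
      _ ≤ 1 - cos (π / (u + 1)) := by linarith [cos_le_one_sub_mul_cos_sq hx]
  · calc 1 - cos (π / (u + 1)) ≤ (π / (u + 1)) ^ 2 / 2 := by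
          linarith [one_sub_sq_div_two_le_cos (x := π / (u + 1))]
      _ ≤ π ^ 2 / 2 / u ^ 2 := by
          rw [div_pow, div_div, div_div, mul_comm]
          gcongr
          linarith

end Real

theorem Sblock_mulVec_apply (N T k : ℕ) (g : ℕ → ℝ) (i : Fin (T + 1)) :
    (Sblock N T k *ᵥ fun j => g j) i =
      (if (i : ℕ) = 0 then (k : ℝ) / (2 * N) else if (i : ℕ) = T then 1 / 2 else 0) * g i
        + (if (i : ℕ) < T then g (i + 1) / 2 else 0)
        + (if 0 < (i : ℕ) then g (i - 1) / 2 else 0) := by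
  obtain ⟨i, hi⟩ := i
  simp only [mulVec, dotProduct, Sblock, of_apply]
  generalize (if i = 0 then (k : ℝ) / (2 * N) else if i = T then 1 / 2 else 0) = d
  have hsplit (j : ℕ) :
      (if i = j then d else if i + 1 = j ∨ j + 1 = i then 1 / 2 else 0) * g j =
        (if i = j then d * g j else 0) + (if i + 1 = j then g j / 2 else 0)
          + (if i - 1 = j then (if 0 < i then g j / 2 else 0) else 0) := by
    split_ifs <;> first | ring1 | (exfalso; omega)
  rw [Fin.sum_univ_eq_sum_range (fun j => (if i = j then d
    else if i + 1 = j ∨ j + 1 = i then 1 / 2 else 0) * g j)]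
  simp only [hsplit, Finset.sum_add_distrib, Finset.sum_ite_eq, Finset.mem_range]
  rw [if_pos hi, if_pos (by omega : i - 1 < T + 1)]
  simp only [Nat.add_lt_add_iff_right]

theorem Sblock_mulVec_eq_smul {N T k : ℕ} (hT : 1 ≤ T) {μ : ℝ} {g : ℝ → ℝ}
    (hrec : ∀ x, g (x + 1) + g (x - 1) = 2 * μ * g x)
    (hleft : (k : ℝ) / (2 * N) * g 0 = g (-1) / 2) (hright : g (T + 1) = g T) :
    (Sblock N T k *ᵥ fun i : Fin (T + 1) => g (i : ℕ)) =
      μ • fun i : Fin (T + 1) => g (i : ℕ) := by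
  ext ⟨i, hi⟩
  rw [Sblock_mulVec_apply N T k (fun n => g n), Pi.smul_apply, smul_eq_mul]
  dsimp only
  rcases Nat.eq_zero_or_pos i with rfl | hi0
  · have := hrec 0
    simp only [zero_add, zero_sub] at this
    simp only [if_pos, show 0 < T by omega, Nat.lt_irrefl, if_false, Nat.cast_zero, Nat.cast_one,
      zero_add, add_zero]
    linarith
  · rw [Nat.cast_sub hi0, Nat.cast_add, Nat.cast_one]
    by_cases hiT : i = T
    · subst i
      have := hrec T
      simp only [hi0.ne', if_false, if_true, Nat.lt_irrefl, hi0]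
      linarith
    · have := hrec i
      simp only [hi0.ne', hiT, if_false, if_true, show i < T by omega, hi0]
      linarith

theorem Sblock_self_mulVec_cos {N T : ℕ} (hN : 1 ≤ N) (hT : 1 ≤ T) {θ : ℝ} {j : ℕ}
    (hθ : θ * (T + 1) = j * π) :
    (Sblock N T N *ᵥ fun i : Fin (T + 1) => cos (θ * ((i : ℕ) + 1 / 2))) =
      cos θ • fun i : Fin (T + 1) => cos (θ * ((i : ℕ) + 1 / 2)) := by
  refine Sblock_mulVec_eq_smul (g := fun x => cos (θ * (x + 1 / 2))) hT (fun x => ?_) ?_ ?_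
  · rw [show θ * (x + 1 + 1 / 2) = θ * (x + 1 / 2) + θ by ring,
      show θ * (x - 1 + 1 / 2) = θ * (x + 1 / 2) - θ by ring, cos_add, cos_sub]
    ring
  · have hN' : (N : ℝ) ≠ 0 := by positivity
    rw [show θ * (-1 + 1 / 2) = -(θ * (0 + 1 / 2)) by ring, cos_neg]
    field_simp
  · have : θ * (T + 1 + 1 / 2) = j * (2 * π) - θ * (T + 1 / 2) := by linear_combination 2 * hθ
    simp only [this, cos_nat_mul_two_pi_sub]

theorem Sblock_zero_mulVec_sin (N : ℕ) {T : ℕ} (hT : 1 ≤ T) {φ : ℝ} {j : ℕ}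
    (hφ : φ * (2 * T + 3) = (2 * j + 1) * π) :
    (Sblock N T 0 *ᵥ fun i : Fin (T + 1) => sin (φ * ((i : ℕ) + 1))) =
      cos φ • fun i : Fin (T + 1) => sin (φ * ((i : ℕ) + 1)) := by
  refine Sblock_mulVec_eq_smul (g := fun x => sin (φ * (x + 1))) hT (fun x => ?_) ?_ ?_
  · rw [show φ * (x + 1 + 1) = φ * (x + 1) + φ by ring,
      show φ * (x - 1 + 1) = φ * (x + 1) - φ by ring, sin_add, sin_sub]
    ring
  · simp
  · have : φ * (T + 1 + 1) = π - φ * (T + 1) + j * (2 * π) := by linear_combination hφ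
    simp only [this, sin_add_nat_mul_two_pi, sin_pi_sub]

-- Yueh–Cheng: the eigenvalues of `S_N` are `cos (selfAngle T j)` and those of `S_0` are
-- `cos (zeroAngle T j)`, for `j ≤ T`.
noncomputable def selfAngle (T j : ℕ) : ℝ := j * π / (T + 1)

noncomputable def zeroAngle (T j : ℕ) : ℝ := (2 * j + 1) * π / (2 * T + 3)

theorem strictMono_selfAngle (T : ℕ) : StrictMono (selfAngle T) := fun i j h => by
  unfold selfAngle; gcongr

theorem selfAngle_nonneg (T j : ℕ) : 0 ≤ selfAngle T j := by unfold selfAngle; positivity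

theorem selfAngle_lt_pi {T j : ℕ} (hj : j ≤ T) : selfAngle T j < π := by
  rw [selfAngle, div_lt_iff₀ (by positivity)]
  have : (j : ℝ) < T + 1 := by exact_mod_cast Nat.lt_succ_of_le hj
  nlinarith [pi_pos]

theorem strictMono_zeroAngle (T : ℕ) : StrictMono (zeroAngle T) := fun i j h => by
  unfold zeroAngle; gcongr

theorem zeroAngle_pos (T j : ℕ) : 0 < zeroAngle T j := by unfold zeroAngle; positivity

theorem zeroAngle_lt_pi {T j : ℕ} (hj : j ≤ T) : zeroAngle T j < π := by
  rw [zeroAngle, div_lt_iff₀ (by positivity)]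
  have : (j : ℝ) ≤ T := by exact_mod_cast hj
  nlinarith [pi_pos]

theorem hasEigenvalue_Sblock_self {N T : ℕ} (hN : 1 ≤ N) (hT : 1 ≤ T) (j : Fin (T + 1)) :
    Module.End.HasEigenvalue (toLin' (Sblock N T N)) (cos (selfAngle T j)) := by
  refine hasEigenvalue_toLin'_of_mulVec_eq_smul (fun h => ?_)
    (Sblock_self_mulVec_cos hN hT (j := j) (by rw [selfAngle]; field_simp))
  have hpos : 0 < cos (selfAngle T j * (((0 : Fin (T + 1)) : ℕ) + 1 / 2)) := by
    have := selfAngle_lt_pi (Nat.lt_succ_iff.1 j.2)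
    have := selfAngle_nonneg T j
    rw [Fin.val_zero, Nat.cast_zero, zero_add]
    exact cos_pos_of_mem_Ioo ⟨by linarith, by linarith⟩
  exact hpos.ne' (congrFun h 0)

theorem hasEigenvalue_Sblock_zero (N : ℕ) {T : ℕ} (hT : 1 ≤ T) (j : Fin (T + 1)) :
    Module.End.HasEigenvalue (toLin' (Sblock N T 0)) (cos (zeroAngle T j)) := by
  refine hasEigenvalue_toLin'_of_mulVec_eq_smul (fun h => ?_)
    (Sblock_zero_mulVec_sin N hT (j := j) (by rw [zeroAngle]; field_simp))
  have hpos : 0 < sin (zeroAngle T j * (((0 : Fin (T + 1)) : ℕ) + 1)) := by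
    simpa using sin_pos_of_pos_of_lt_pi (zeroAngle_pos T j)
      (zeroAngle_lt_pi (Nat.lt_succ_iff.1 j.2))
  exact hpos.ne' (congrFun h 0)

theorem injective_cos_selfAngle (T : ℕ) :
    Function.Injective fun j : Fin (T + 1) => cos (selfAngle T j) :=
  injective_cos_comp_fin (strictMono_selfAngle T) (selfAngle_nonneg T 0) (selfAngle_lt_pi le_rfl).le

theorem spectrum_Sblock_self {N T : ℕ} (hN : 1 ≤ N) (hT : 1 ≤ T) :
    spectrum ℝ (Sblock N T N) = Set.range fun j : Fin (T + 1) => cos (selfAngle T j) :=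
  spectrum_eq_range_of_injective (injective_cos_selfAngle T) (hasEigenvalue_Sblock_self hN hT)

theorem finrank_eigenspace_Sblock_self_one {N T : ℕ} (hN : 1 ≤ N) (hT : 1 ≤ T) :
    Module.finrank ℝ (Module.End.eigenspace (toLin' (Sblock N T N)) 1) = 1 := by
  have h := Module.End.finrank_eigenspace_eq_one_of_injective
    (injective_cos_selfAngle T) (by simp) (hasEigenvalue_Sblock_self hN hT) 0
  rwa [show cos (selfAngle T ((0 : Fin (T + 1)) : ℕ)) = 1 by simp [selfAngle]] at h

theorem spectrum_Sblock_zero (N : ℕ) {T : ℕ} (hT : 1 ≤ T) :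
    spectrum ℝ (Sblock N T 0) = Set.range fun j : Fin (T + 1) => cos (zeroAngle T j) :=
  spectrum_eq_range_of_injective
    (injective_cos_comp_fin (strictMono_zeroAngle T) (zeroAngle_pos T 0).le
      (zeroAngle_lt_pi le_rfl).le)
    (hasEigenvalue_Sblock_zero N hT)

/-- block spectral gap of the DQC transfer matrix: `S_N` has largest
eigenvalue `1` with a one-dimensional eigenspace and second-largest eigenvalue
`cos(π/(T+1))`; `S_0` has largest eigenvalue `cos(π/(2T+3))`; and the gap
`1 - cos(π/(T+1))` is `Θ(T⁻²)`. -/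
theorem dqc_block_spectral_gap (N T : ℕ) (hN : 1 ≤ N) (hT : 1 ≤ T) :
    ((1 : ℝ) ∈ spectrum ℝ (Sblock N T N) ∧
      (∀ μ ∈ spectrum ℝ (Sblock N T N), μ ≤ 1) ∧
      Module.finrank ℝ (Module.End.eigenspace (Matrix.toLin' (Sblock N T N)) 1) = 1 ∧
      Real.cos (π / (T + 1)) ∈ spectrum ℝ (Sblock N T N) ∧
      (∀ μ ∈ spectrum ℝ (Sblock N T N), μ ≠ 1 → μ ≤ Real.cos (π / (T + 1)))) ∧
    (Real.cos (π / (2 * T + 3)) ∈ spectrum ℝ (Sblock N T 0) ∧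
      (∀ μ ∈ spectrum ℝ (Sblock N T 0), μ ≤ Real.cos (π / (2 * T + 3)))) ∧
    (∃ c₁ c₂ : ℝ, 0 < c₁ ∧ 0 < c₂ ∧ ∀ T' : ℕ, 1 ≤ T' →
      c₁ / (T' : ℝ) ^ 2 ≤ 1 - Real.cos (π / ((T' : ℝ) + 1)) ∧
      1 - Real.cos (π / ((T' : ℝ) + 1)) ≤ c₂ / (T' : ℝ) ^ 2) := by
  have hspecN := spectrum_Sblock_self hN hT
  have hspec0 := spectrum_Sblock_zero N hT
  refine ⟨⟨?_, ?_, finrank_eigenspace_Sblock_self_one hN hT, ?_, ?_⟩, ⟨?_, ?_⟩,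
    ⟨1 / 2, π ^ 2 / 2, by norm_num, by positivity,
      fun T' hT' => one_sub_cos_pi_div_add_one_bounds (by exact_mod_cast hT')⟩⟩
  all_goals simp only [hspecN, hspec0]
  · exact ⟨0, by simp [selfAngle]⟩
  · rintro _ ⟨j, rfl⟩
    exact cos_le_one _
  · exact ⟨⟨1, by omega⟩, by simp [selfAngle]⟩
  · rintro _ ⟨j, rfl⟩ hj
    have hj0 : (j : ℕ) ≠ 0 := fun h => hj (by simp [h, selfAngle])
    simpa [selfAngle] using cos_le_cos_of_nonneg_of_le_pi (selfAngle_nonneg T 1)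
      (selfAngle_lt_pi (Nat.lt_succ_iff.1 j.2)).le
      ((strictMono_selfAngle T).monotone (Nat.one_le_iff_ne_zero.2 hj0))
  · exact ⟨0, by simp [zeroAngle]⟩
  · rintro _ ⟨j, rfl⟩
    simpa [zeroAngle] using cos_le_cos_of_nonneg_of_le_pi (zeroAngle_pos T 0).le
      (zeroAngle_lt_pi (Nat.lt_succ_iff.1 j.2)).le ((strictMono_zeroAngle T).monotone j.val.zero_le)
end
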